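/- arXiv:1801.03254 — 4 statements merged into one kernel-verified Lean document; each statement's English description precedes it below -/
import Mathlib

section
/- Let P be the group of upper triangular matrices in SL(3,ℝ) and w0 = [[0,0,-1],[0,-1,0],[-1,0,0]], and n = n(1,0,0) (unitriangular with (1,2)-entry 1). Then P ∩ w0⁻¹Pw0 ∩ (w0n)⁻¹P(w0n) = { diag(a, a, 1/a²) : a ∈ ℝ, a ≠ 0 }. -/
open Matrix

def nmat (x y z : ℝ) : Matrix (Fin 3) (Fin 3) ℝ :=
  !![1, x, y; 0, 1, z; 0, 0, 1]

def w0mat : Matrix (Fin 3) (Fin 3) ℝ := !![0, 0, -1; 0, -1, 0; -1, 0, 0]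

lemma w0_inv : w0mat⁻¹ = w0mat := by
  apply Matrix.inv_eq_left_inv
  ext i j
  fin_cases i <;> fin_cases j <;>
    simp [w0mat, nmat, Matrix.mul_apply, Fin.sum_univ_three, Matrix.one_apply, Matrix.vecHead, Matrix.vecTail]

lemma m_inv : (w0mat * nmat 1 0 0)⁻¹ = !![0,1,-1;0,-1,0;-1,0,0] := by
  apply Matrix.inv_eq_left_inv
  ext i j
  fin_cases i <;> fin_cases j <;>
    simp [w0mat, nmat, Matrix.mul_apply, Fin.sum_univ_three, Matrix.one_apply, Matrix.vecHead, Matrix.vecTail]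

theorem stabilizer_n100 :
    {g : Matrix (Fin 3) (Fin 3) ℝ | g.det = 1 ∧ g.BlockTriangular id ∧
      (w0mat * g * w0mat⁻¹).BlockTriangular id ∧
      ((w0mat * nmat 1 0 0) * g * (w0mat * nmat 1 0 0)⁻¹).BlockTriangular id} =
    {g : Matrix (Fin 3) (Fin 3) ℝ |
      ∃ a : ℝ, a ≠ 0 ∧ g = Matrix.diagonal ![a, a, (a ^ 2)⁻¹]} := by
  ext g
  simp only [Set.mem_setOf_eq]
  constructor
  · rintro ⟨hdet, h1, h2, h3⟩
    rw [w0_inv] at h2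
    rw [m_inv] at h3
    have e10 : g 1 0 = 0 := h1 (by decide)
    have e20 : g 2 0 = 0 := h1 (by decide)
    have e21 : g 2 1 = 0 := h1 (by decide)
    have e12 : g 1 2 = 0 := by
      have := h2 (show id (0:Fin 3) < id 1 by decide)
      simpa [w0mat, Matrix.mul_apply, Fin.sum_univ_three, Matrix.vecMul, dotProduct, Matrix.vecHead, Matrix.vecTail] using this
    have e02 : g 0 2 = 0 := by
      have := h2 (show id (0:Fin 3) < id 2 by decide)
      simpa [w0mat, Matrix.mul_apply, Fin.sum_univ_three, Matrix.vecMul, dotProduct, Matrix.vecHead, Matrix.vecTail] using this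
    have e01 : g 0 1 = 0 := by
      have := h2 (show id (1:Fin 3) < id 2 by decide)
      simpa [w0mat, Matrix.mul_apply, Fin.sum_univ_three, Matrix.vecMul, dotProduct, Matrix.vecHead, Matrix.vecTail] using this
    have eab : g 1 1 = g 0 0 := by
      have := h3 (show id (1:Fin 3) < id 2 by decide)
      simp [w0mat, nmat, Matrix.mul_apply, Fin.sum_univ_three, Matrix.vecMul, dotProduct, Matrix.vecHead, Matrix.vecTail, e10, e20, e21, e12, e02, e01] at this
      linarith
    have hdet' : g 0 0 ^ 2 * g 2 2 = 1 := by
      rw [Matrix.det_fin_three] at hdet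
      rw [e10, e20, e21, e12, e02, e01, eab] at hdet
      ring_nf at hdet ⊢
      linarith
    have ha : g 0 0 ≠ 0 := by
      intro h
      rw [h] at hdet'
      norm_num at hdet'
    refine ⟨g 0 0, ha, ?_⟩
    have e22 : g 2 2 = (g 0 0 ^ 2)⁻¹ := by
      field_simp
      linarith [hdet']
    ext i j
    fin_cases i <;> fin_cases j <;>
      simp [Matrix.diagonal_apply, e10, e20, e21, e12, e02, e01, eab, e22]
  · rintro ⟨a, ha, rfl⟩
    refine ⟨?_, ?_, ?_, ?_⟩
    · rw [Matrix.det_diagonal]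
      rw [Fin.prod_univ_three]
      simp only [Matrix.cons_val_zero, Matrix.cons_val_one, Matrix.head_cons, Matrix.cons_val_two, Matrix.tail_cons]
      field_simp
    · intro i j hij
      fin_cases i <;> fin_cases j <;> simp_all [Matrix.diagonal]
    · rw [w0_inv]
      intro i j hij
      fin_cases i <;> fin_cases j <;>
        simp_all [w0mat, Matrix.mul_apply, Fin.sum_univ_three, Matrix.diagonal_apply, Matrix.vecMul, dotProduct, Matrix.vecHead, Matrix.vecTail]
    · rw [m_inv]
      intro i j hij
      fin_cases i <;> fin_cases j <;>
        simp_all [w0mat, nmat, Matrix.mul_apply, Fin.sum_univ_three, Matrix.diagonal_apply, Matrix.vecMul, dotProduct, Matrix.vecHead, Matrix.vecTail]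
end

section
/- For every α with 0 < α < 1, the function φ(r) = ∫_ℝ (1+x²)^{-1/2} (1+(x+r)²)^{-1/2} dx satisfies φ(r) = O(r^{-α}) as r → ∞; i.e., there exist C > 0 and R > 0 such that φ(r) ≤ C·r^{-α} for all r ≥ R. -/
open MeasureTheory

noncomputable def phi (r : ℝ) : ℝ :=
  ∫ x : ℝ, 1 / (Real.sqrt (1 + x ^ 2) * Real.sqrt (1 + (x + r) ^ 2))

lemma aux_pw (α t a b : ℝ) (hα0 : 0 < α) (hα1 : α < 1) (ht : 0 < t)
    (ha : 1 ≤ a) (hb : 1 ≤ b) (hab : a ≤ b) (htb : t ^ (2:ℕ) ≤ b) :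
    1 / (Real.sqrt a * Real.sqrt b) ≤ t ^ (-α) * a ^ (-(2 - α) / 2) := by
  have ha0 : (0:ℝ) < a := lt_of_lt_of_le one_pos ha
  have hb0 : (0:ℝ) < b := lt_of_lt_of_le one_pos hb
  set q : ℝ := (2 - α) / 2 with hq
  have hq0 : 0 < q := by rw [hq]; linarith
  -- key : t^α * a^q ≤ √a * √b
  have key : t ^ α * a ^ q ≤ Real.sqrt a * Real.sqrt b := by
    rw [← Real.sqrt_mul ha0.le]
    rw [Real.sqrt_eq_rpow]
    have h1 : t ^ α * a ^ q = ((t ^ (2:ℕ)) ^ α * a ^ (2 - α)) ^ ((1:ℝ)/2) := by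
      rw [Real.mul_rpow (by positivity) (by positivity),
        ← Real.rpow_natCast t 2, ← Real.rpow_mul ht.le, ← Real.rpow_mul ht.le,
        ← Real.rpow_mul ha0.le]
      norm_num
      rw [hq]; ring_nf
    rw [h1]
    apply Real.rpow_le_rpow (by positivity) _ (by norm_num)
    have h2 : (t ^ (2:ℕ)) ^ α ≤ b ^ α := Real.rpow_le_rpow (by positivity) htb hα0.le
    have h3 : a ^ (2 - α) = a ^ (1 - α) * a := by
      rw [show (2 - α) = (1 - α) + 1 by ring, Real.rpow_add ha0, Real.rpow_one]
    have h4 : a ^ (1 - α) ≤ b ^ (1 - α) := Real.rpow_le_rpow ha0.le hab (by linarith)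
    have h5 : b ^ α * b ^ (1 - α) = b := by
      rw [← Real.rpow_add hb0]; norm_num
    calc (t ^ (2:ℕ)) ^ α * a ^ (2 - α) ≤ b ^ α * (b ^ (1 - α) * a) := by
          rw [h3]
          apply mul_le_mul h2 (mul_le_mul_of_nonneg_right h4 ha0.le) (by positivity)
            (by positivity)
      _ = a * b := by rw [← mul_assoc, h5]; ring
  have hpos : (0:ℝ) < t ^ α * a ^ q := by positivity
  have step : 1 / (Real.sqrt a * Real.sqrt b) ≤ 1 / (t ^ α * a ^ q) :=
    one_div_le_one_div_of_le hpos key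
  refine step.trans_eq ?_
  rw [one_div, mul_inv, ← Real.rpow_neg ht.le, ← Real.rpow_neg ha0.le, neg_div]

theorem phi_decay (α : ℝ) (hα0 : 0 < α) (hα1 : α < 1) :
    ∃ C > 0, ∃ R > 0, ∀ r ≥ R, phi r ≤ C * r ^ (-α) := by
  have hg : Integrable (fun x : ℝ => (1 + x ^ 2) ^ (-(2 - α) / 2)) := by
    have h := integrable_rpow_neg_one_add_norm_sq (E := ℝ) (μ := volume) (r := 2 - α)
      (by simp; linarith)
    simpa [Real.norm_eq_abs, sq_abs] using h
  set I := ∫ x : ℝ, (1 + x ^ 2) ^ (-(2 - α) / 2) with hI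
  have hI0 : 0 ≤ I := integral_nonneg fun x => Real.rpow_nonneg (by positivity) _
  have h2pos : (0:ℝ) < 2 ^ α := Real.rpow_pos_of_pos (by norm_num) α
  refine ⟨2 ^ α * (2 * I + 1), by positivity, 1, one_pos, fun r hr => ?_⟩
  have hr0 : (0:ℝ) < r := lt_of_lt_of_le one_pos hr
  have ht : (0:ℝ) < r / 2 := by linarith
  have hgr : Integrable (fun x : ℝ => (1 + (x + r) ^ 2) ^ (-(2 - α) / 2)) :=
    hg.comp_add_right r
  have hbound : ∀ x : ℝ, 1 / (Real.sqrt (1 + x ^ 2) * Real.sqrt (1 + (x + r) ^ 2)) ≤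
      (r / 2) ^ (-α) * ((1 + x ^ 2) ^ (-(2 - α) / 2) + (1 + (x + r) ^ 2) ^ (-(2 - α) / 2)) := by
    intro x
    have ha : (1:ℝ) ≤ 1 + x ^ 2 := by nlinarith [sq_nonneg x]
    have hb : (1:ℝ) ≤ 1 + (x + r) ^ 2 := by nlinarith [sq_nonneg (x + r)]
    rcases le_total (1 + x ^ 2) (1 + (x + r) ^ 2) with hab | hab
    · have htb : (r / 2) ^ (2:ℕ) ≤ 1 + (x + r) ^ 2 := by nlinarith [sq_nonneg (2 * x + r)]
      have := aux_pw α (r/2) (1 + x ^ 2) (1 + (x + r) ^ 2) hα0 hα1 ht ha hb hab htb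
      refine this.trans ?_
      have h1 : (0:ℝ) ≤ (1 + (x + r) ^ 2) ^ (-(2 - α) / 2) := Real.rpow_nonneg (by positivity) _
      have h2 : (0:ℝ) ≤ (r / 2) ^ (-α) := Real.rpow_nonneg ht.le _
      nlinarith
    · have htb : (r / 2) ^ (2:ℕ) ≤ 1 + x ^ 2 := by nlinarith [sq_nonneg (2 * x + r)]
      have := aux_pw α (r/2) (1 + (x + r) ^ 2) (1 + x ^ 2) hα0 hα1 ht hb ha hab htb
      rw [mul_comm (Real.sqrt (1 + (x + r) ^ 2))] at this
      refine this.trans ?_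
      have h1 : (0:ℝ) ≤ (1 + x ^ 2) ^ (-(2 - α) / 2) := Real.rpow_nonneg (by positivity) _
      have h2 : (0:ℝ) ≤ (r / 2) ^ (-α) := Real.rpow_nonneg ht.le _
      nlinarith
  have step1 : phi r ≤ ∫ x : ℝ, (r / 2) ^ (-α) *
      ((1 + x ^ 2) ^ (-(2 - α) / 2) + (1 + (x + r) ^ 2) ^ (-(2 - α) / 2)) := by
    apply integral_mono_of_nonneg
    · filter_upwards with x
      positivity
    · exact (hg.add hgr).const_mul _
    · filter_upwards with x
      exact hbound x
  rw [MeasureTheory.integral_const_mul, integral_add hg hgr] at step1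
  have htr : (∫ x : ℝ, (1 + (x + r) ^ 2) ^ (-(2 - α) / 2)) = I := by
    rw [hI]
    exact integral_add_right_eq_self (fun x : ℝ => (1 + x ^ 2) ^ (-(2 - α) / 2)) r
  rw [htr, ← hI] at step1
  have h2 : (r / 2) ^ (-α) = 2 ^ α * r ^ (-α) := by
    rw [Real.div_rpow hr0.le (by norm_num : (0:ℝ) ≤ 2),
      Real.rpow_neg (by norm_num : (0:ℝ) ≤ 2)]
    field_simp
  rw [h2] at step1
  have hra : (0:ℝ) ≤ r ^ (-α) := Real.rpow_nonneg hr0.le _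
  calc phi r ≤ 2 ^ α * r ^ (-α) * (I + I) := step1
    _ = 2 ^ α * (I + I) * r ^ (-α) := by ring
    _ ≤ 2 ^ α * (2 * I + 1) * r ^ (-α) := by
        apply mul_le_mul_of_nonneg_right _ hra
        apply mul_le_mul_of_nonneg_left (by linarith) h2pos.le
end

section
/- Let G = SL(3,ℝ), P its upper triangular subgroup, N its unipotent upper triangular subgroup, and W = {1, s1, s2, z1, z2, w0} the set of six explicit monomial matrices (permutation matrices with signs, determinant 1). Then G is the disjoint union over w ∈ W of the double cosets P·w·N; equivalently, every g ∈ SL(3,ℝ) can be written g = p·w·n for unique w ∈ W with p ∈ P, n ∈ N, and the double cosets PwP for distinct w ∈ W are disjoint. -/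
/-! The double coset `P w N` of `g` is read off from which lower-left corner minors of `g`
vanish: the entry `g 2 0`, the `2 × 2` minor on rows `1, 2` and columns `0, 1`, and, when both
vanish, the entries `g 1 0` and `g 2 1`. Multiplying on the left by `p ∈ P` rescales these by
nonzero diagonal entries of `p`, and multiplying on the right by `n ∈ N` does not change them, so
the pattern is an invariant of the double coset; the six elements of `W` realise the six patterns.
Conversely `g ∈ P w N` as soon as `g * n * w⁻¹` is upper triangular for some `n ∈ N`, and in each
case such an `n` is found by solving a triangular or `2 × 2` linear system. -/

open Matrix

def s1mat : Matrix (Fin 3) (Fin 3) ℝ := !![0, 1, 0; 1, 0, 0; 0, 0, -1]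
def s2mat : Matrix (Fin 3) (Fin 3) ℝ := !![-1, 0, 0; 0, 0, 1; 0, 1, 0]
def z1mat : Matrix (Fin 3) (Fin 3) ℝ := !![0, -1, 0; 0, 0, -1; 1, 0, 0]
def z2mat : Matrix (Fin 3) (Fin 3) ℝ := !![0, 0, 1; -1, 0, 0; 0, -1, 0]
def Wset : Set (Matrix (Fin 3) (Fin 3) ℝ) :=
  {1, s1mat, s2mat, z1mat, z2mat, w0mat}

/-- membership in `P`: upper triangular with determinant 1 -/
def inP (p : Matrix (Fin 3) (Fin 3) ℝ) : Prop :=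
  p.BlockTriangular id ∧ p.det = 1

/-- membership in `N`: unipotent upper triangular -/
def inN (m : Matrix (Fin 3) (Fin 3) ℝ) : Prop :=
  ∃ x y z : ℝ, m = nmat x y z


lemma isUpperTriangular_fin_three_of_eq_zero {R : Type*} [Zero R] {p : Matrix (Fin 3) (Fin 3) R}
    (h10 : p 1 0 = 0) (h20 : p 2 0 = 0) (h21 : p 2 1 = 0) : p.IsUpperTriangular := by
  intro i j hij
  fin_cases i <;> fin_cases j <;> first | exact absurd hij (by decide) | assumption

namespace Matrix.IsUpperTriangular

variable {R : Type*} {p : Matrix (Fin 3) (Fin 3) R}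

lemma mul_apply_two [Semiring R] (hp : p.IsUpperTriangular) (g : Matrix (Fin 3) (Fin 3) R)
    (j : Fin 3) : (p * g) 2 j = p 2 2 * g 2 j := by
  simp [mul_apply, Fin.sum_univ_three, hp (show (0 : Fin 3) < 2 by decide),
    hp (show (1 : Fin 3) < 2 by decide)]

lemma mul_apply_one [Semiring R] (hp : p.IsUpperTriangular) (g : Matrix (Fin 3) (Fin 3) R)
    (j : Fin 3) : (p * g) 1 j = p 1 1 * g 1 j + p 1 2 * g 2 j := by
  simp [mul_apply, Fin.sum_univ_three, hp (show (0 : Fin 3) < 1 by decide)]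

lemma diag_ne_zero [CommRing R] [IsDomain R] (hp : p.IsUpperTriangular) (hdet : p.det ≠ 0)
    (i : Fin 3) : p i i ≠ 0 := by
  rw [det_of_isUpperTriangular hp] at hdet
  exact Finset.prod_ne_zero_iff.mp hdet i (Finset.mem_univ i)

end Matrix.IsUpperTriangular

def lowerLeftMinor {R : Type*} [CommRing R] (g : Matrix (Fin 3) (Fin 3) R) : R :=
  g 1 0 * g 2 1 - g 1 1 * g 2 0

lemma lowerLeftMinor_mul_of_isUpperTriangular {R : Type*} [CommRing R]
    {p : Matrix (Fin 3) (Fin 3) R} (hp : p.IsUpperTriangular) (g : Matrix (Fin 3) (Fin 3) R) :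
    lowerLeftMinor (p * g) = p 1 1 * p 2 2 * lowerLeftMinor g := by
  simp only [lowerLeftMinor, hp.mul_apply_one, hp.mul_apply_two]
  ring

section Unipotent

variable (g : Matrix (Fin 3) (Fin 3) ℝ) (x y z : ℝ) (i : Fin 3)

lemma mul_nmat_apply_zero : (g * nmat x y z) i 0 = g i 0 := by
  simp [nmat, mul_apply, Fin.sum_univ_three]

lemma mul_nmat_apply_one : (g * nmat x y z) i 1 = g i 0 * x + g i 1 := by
  simp [nmat, mul_apply, Fin.sum_univ_three]

lemma mul_nmat_apply_two : (g * nmat x y z) i 2 = g i 0 * y + g i 1 * z + g i 2 := by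
  simp [nmat, mul_apply, Fin.sum_univ_three]

lemma lowerLeftMinor_mul_nmat : lowerLeftMinor (g * nmat x y z) = lowerLeftMinor g := by
  simp only [lowerLeftMinor, mul_nmat_apply_zero, mul_nmat_apply_one]
  ring

lemma nmat_mul_nmat (x' y' z' : ℝ) :
    nmat x y z * nmat x' y' z' = nmat (x + x') (y + x * z' + y') (z + z') := by
  ext i j
  fin_cases i <;> fin_cases j <;> simp [nmat, mul_apply, Fin.sum_univ_three] <;> ring

lemma nmat_mul_nmat_neg : nmat x y z * nmat (-x) (x * z - y) (-z) = 1 := by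
  rw [nmat_mul_nmat, add_neg_cancel, add_neg_cancel, show y + x * -z + (x * z - y) = 0 by ring]
  ext i j
  fin_cases i <;> fin_cases j <;> simp [nmat]

lemma det_nmat : (nmat x y z).det = 1 := by
  simp [nmat, det_fin_three]

end Unipotent

lemma det_of_mem_Wset {w : Matrix (Fin 3) (Fin 3) ℝ} (hw : w ∈ Wset) : w.det = 1 := by
  simp only [Wset, Set.mem_insert_iff, Set.mem_singleton_iff] at hw
  rcases hw with rfl | rfl | rfl | rfl | rfl | rfl <;>
    simp [det_fin_three, s1mat, s2mat, z1mat, z2mat, w0mat]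

lemma s1mat_mul_self : s1mat * s1mat = 1 := by
  ext i j; fin_cases i <;> fin_cases j <;> simp [s1mat, mul_apply, Fin.sum_univ_three]

lemma s2mat_mul_self : s2mat * s2mat = 1 := by
  ext i j; fin_cases i <;> fin_cases j <;> simp [s2mat, mul_apply, Fin.sum_univ_three]

lemma z1mat_mul_z2mat : z1mat * z2mat = 1 := by
  ext i j; fin_cases i <;> fin_cases j <;> simp [z1mat, z2mat, mul_apply, Fin.sum_univ_three]

lemma z2mat_mul_z1mat : z2mat * z1mat = 1 := by
  ext i j; fin_cases i <;> fin_cases j <;> simp [z1mat, z2mat, mul_apply, Fin.sum_univ_three]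

lemma w0mat_mul_self : w0mat * w0mat = 1 := by
  ext i j; fin_cases i <;> fin_cases j <;> simp [w0mat, mul_apply, Fin.sum_univ_three]

noncomputable def weylRep (g : Matrix (Fin 3) (Fin 3) ℝ) : Matrix (Fin 3) (Fin 3) ℝ :=
  if g 2 0 = 0 then
    if lowerLeftMinor g = 0 then
      if g 1 0 = 0 then (if g 2 1 = 0 then 1 else s2mat) else s1mat
    else z2mat
  else if lowerLeftMinor g = 0 then z1mat else w0mat

lemma weylRep_mem_Wset (g : Matrix (Fin 3) (Fin 3) ℝ) : weylRep g ∈ Wset := by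
  unfold weylRep
  split_ifs <;> simp [Wset]

lemma weylRep_of_mem_Wset {w : Matrix (Fin 3) (Fin 3) ℝ} (hw : w ∈ Wset) : weylRep w = w := by
  simp only [Wset, Set.mem_insert_iff, Set.mem_singleton_iff] at hw
  rcases hw with rfl | rfl | rfl | rfl | rfl | rfl <;>
    simp [weylRep, lowerLeftMinor, s1mat, s2mat, z1mat, z2mat, w0mat]

lemma weylRep_mul_of_isUpperTriangular {p : Matrix (Fin 3) (Fin 3) ℝ} (hp : p.IsUpperTriangular)
    (hdet : p.det ≠ 0) (g : Matrix (Fin 3) (Fin 3) ℝ) : weylRep (p * g) = weylRep g := by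
  have h11 := hp.diag_ne_zero hdet 1
  have h22 := hp.diag_ne_zero hdet 2
  by_cases h20 : g 2 0 = 0 <;>
    simp [weylRep, lowerLeftMinor_mul_of_isUpperTriangular hp, hp.mul_apply_one,
      hp.mul_apply_two, h11, h22, h20]

lemma weylRep_mul_nmat (g : Matrix (Fin 3) (Fin 3) ℝ) (x y z : ℝ) :
    weylRep (g * nmat x y z) = weylRep g := by
  by_cases h20 : g 2 0 = 0 <;>
    simp [weylRep, lowerLeftMinor_mul_nmat, mul_nmat_apply_zero, mul_nmat_apply_one, h20]

def bruhatCell (w : Matrix (Fin 3) (Fin 3) ℝ) : Set (Matrix (Fin 3) (Fin 3) ℝ) :=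
  {g | ∃ p m, inP p ∧ inN m ∧ g = p * w * m}

lemma eq_weylRep_of_mem_bruhatCell {w g : Matrix (Fin 3) (Fin 3) ℝ} (hw : w ∈ Wset)
    (hg : g ∈ bruhatCell w) : w = weylRep g := by
  obtain ⟨p, m, ⟨hp, hdet⟩, ⟨x, y, z, rfl⟩, rfl⟩ := hg
  rw [weylRep_mul_nmat, weylRep_mul_of_isUpperTriangular hp (by simp [hdet]),
    weylRep_of_mem_Wset hw]

lemma mem_bruhatCell_of_isUpperTriangular {g w w' : Matrix (Fin 3) (Fin 3) ℝ} (hg : g.det = 1)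
    (hw : w' * w = 1) (hw' : w'.det = 1) (x y z : ℝ)
    (h : (g * nmat x y z * w').IsUpperTriangular) : g ∈ bruhatCell w :=
  ⟨g * nmat x y z * w', nmat (-x) (x * z - y) (-z), ⟨h, by simp [det_mul, hg, det_nmat, hw']⟩,
    ⟨_, _, _, rfl⟩, by rw [mul_assoc _ w', hw, mul_one, mul_assoc, nmat_mul_nmat_neg, mul_one]⟩

section Existence

variable {g : Matrix (Fin 3) (Fin 3) ℝ}

lemma mem_bruhatCell_one (hg : g.det = 1) (h20 : g 2 0 = 0) (h10 : g 1 0 = 0)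
    (h21 : g 2 1 = 0) : g ∈ bruhatCell 1 := by
  refine mem_bruhatCell_of_isUpperTriangular hg (mul_one 1) det_one 0 0 0 ?_
  apply isUpperTriangular_fin_three_of_eq_zero <;>
    simp [mul_nmat_apply_zero, mul_nmat_apply_one, *]

lemma mem_bruhatCell_s1mat (hg : g.det = 1) (h20 : g 2 0 = 0) (h10 : g 1 0 ≠ 0)
    (h21 : g 2 1 = 0) : g ∈ bruhatCell s1mat := by
  refine mem_bruhatCell_of_isUpperTriangular hg s1mat_mul_self (det_of_mem_Wset (by simp [Wset]))
    (-g 1 1 / g 1 0) 0 0 ?_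
  apply isUpperTriangular_fin_three_of_eq_zero <;> rw [mul_apply, Fin.sum_univ_three] <;>
    simp [s1mat, mul_nmat_apply_zero, mul_nmat_apply_one, mul_nmat_apply_two, *]
  field_simp
  ring

lemma mem_bruhatCell_s2mat (hg : g.det = 1) (h20 : g 2 0 = 0) (h10 : g 1 0 = 0)
    (h21 : g 2 1 ≠ 0) : g ∈ bruhatCell s2mat := by
  refine mem_bruhatCell_of_isUpperTriangular hg s2mat_mul_self (det_of_mem_Wset (by simp [Wset]))
    0 0 (-g 2 2 / g 2 1) ?_
  apply isUpperTriangular_fin_three_of_eq_zero <;> rw [mul_apply, Fin.sum_univ_three] <;>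
    simp [s2mat, mul_nmat_apply_zero, mul_nmat_apply_one, mul_nmat_apply_two, *]
  field_simp
  ring

lemma mem_bruhatCell_z1mat (hg : g.det = 1) (h20 : g 2 0 ≠ 0) (hM : lowerLeftMinor g = 0) :
    g ∈ bruhatCell z1mat := by
  unfold lowerLeftMinor at hM
  refine mem_bruhatCell_of_isUpperTriangular hg z2mat_mul_z1mat (det_of_mem_Wset (by simp [Wset]))
    (-g 2 1 / g 2 0) (-g 2 2 / g 2 0) 0 ?_
  apply isUpperTriangular_fin_three_of_eq_zero <;> rw [mul_apply, Fin.sum_univ_three] <;>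
    simp [z2mat, mul_nmat_apply_zero, mul_nmat_apply_one, mul_nmat_apply_two, *]
  · field_simp
    linear_combination hM
  all_goals field_simp
  all_goals ring

lemma mem_bruhatCell_z2mat (hg : g.det = 1) (h20 : g 2 0 = 0) (h10 : g 1 0 ≠ 0)
    (h21 : g 2 1 ≠ 0) : g ∈ bruhatCell z2mat := by
  refine mem_bruhatCell_of_isUpperTriangular hg z1mat_mul_z2mat (det_of_mem_Wset (by simp [Wset]))
    0 ((g 1 1 * g 2 2 - g 1 2 * g 2 1) / (g 1 0 * g 2 1)) (-g 2 2 / g 2 1) ?_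
  apply isUpperTriangular_fin_three_of_eq_zero <;> rw [mul_apply, Fin.sum_univ_three] <;>
    simp [z1mat, mul_nmat_apply_zero, mul_nmat_apply_one, mul_nmat_apply_two, *]
  all_goals field_simp
  all_goals ring

lemma mem_bruhatCell_w0mat (hg : g.det = 1) (h20 : g 2 0 ≠ 0) (hM : lowerLeftMinor g ≠ 0) :
    g ∈ bruhatCell w0mat := by
  -- Cramer's rule: `(y, z)` kills rows `1, 2` of column `2` of `g * nmat x y z`.
  refine mem_bruhatCell_of_isUpperTriangular hg w0mat_mul_self (det_of_mem_Wset (by simp [Wset]))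
    (-g 2 1 / g 2 0) ((g 1 1 * g 2 2 - g 1 2 * g 2 1) / lowerLeftMinor g)
    ((g 1 2 * g 2 0 - g 1 0 * g 2 2) / lowerLeftMinor g) ?_
  apply isUpperTriangular_fin_three_of_eq_zero <;> rw [mul_apply, Fin.sum_univ_three] <;>
    simp [w0mat, mul_nmat_apply_zero, mul_nmat_apply_one, mul_nmat_apply_two, *]
  all_goals field_simp
  · unfold lowerLeftMinor; ring
  · unfold lowerLeftMinor; ring
  · ring

end Existence

lemma mem_bruhatCell_weylRep {g : Matrix (Fin 3) (Fin 3) ℝ} (hg : g.det = 1) :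
    g ∈ bruhatCell (weylRep g) := by
  unfold weylRep
  split_ifs with h20 hM h10 h21 hM
  · exact mem_bruhatCell_one hg h20 h10 h21
  · exact mem_bruhatCell_s2mat hg h20 h10 h21
  · refine mem_bruhatCell_s1mat hg h20 h10 ?_
    simpa [lowerLeftMinor, h20, h10] using hM
  · refine mem_bruhatCell_z2mat hg h20 ?_ ?_ <;> rintro h <;> simp [lowerLeftMinor, h, h20] at hM
  · exact mem_bruhatCell_z1mat hg h20 hM
  · exact mem_bruhatCell_w0mat hg h20 hM

/-- Bruhat decomposition of `SL(3,ℝ)`: every determinant-one matrix lies in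
`P·w·N` for a unique `w` among the six Weyl representatives. -/
theorem bruhat_decomposition (g : Matrix (Fin 3) (Fin 3) ℝ) (hg : g.det = 1) :
    ∃ w ∈ Wset, (∃ p m, inP p ∧ inN m ∧ g = p * w * m) ∧
      ∀ w' ∈ Wset, (∃ p m, inP p ∧ inN m ∧ g = p * w' * m) → w' = w :=
  ⟨weylRep g, weylRep_mem_Wset g, mem_bruhatCell_weylRep hg,
    fun _ hw' hg' => eq_weylRep_of_mem_bruhatCell hw' hg'⟩
end

section
/- Let u₁, ..., u_k be distinct nonzero real numbers. The points p_i = (P, P·w0, P·w0·n(1,1,u_i)) in (P\SL(3,ℝ))³ lie in pairwise distinct orbits of the diagonal right SL(3,ℝ)-action: for i ≠ j there is no g ∈ SL(3,ℝ) with P·g = P, P·w0·g = P·w0, and P·w0·n(1,1,u_i)·g = P·w0·n(1,1,u_j). -/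
open Matrix

/-- For distinct nonzero `u₁, u₂`, the points `(P, P·w0, P·w0·n(1,1,uᵢ))` lie in
distinct orbits of the diagonal right action of `SL(3,ℝ)`. -/
theorem distinct_orbits (u₁ u₂ : ℝ) (h₁ : u₁ ≠ 0) (h₂ : u₂ ≠ 0) (hne : u₁ ≠ u₂) :
    ¬ ∃ g : Matrix (Fin 3) (Fin 3) ℝ, g.det = 1 ∧
      g.BlockTriangular id ∧
      (w0mat * g * w0mat⁻¹).BlockTriangular id ∧
      ((w0mat * nmat 1 1 u₁) * g * (w0mat * nmat 1 1 u₂)⁻¹).BlockTriangular id := by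
  rintro ⟨g, hdet, hg, h1, h2⟩
  have hw0inv : w0mat⁻¹ = w0mat := by
    apply Matrix.inv_eq_right_inv
    show w0mat * w0mat = 1
    norm_num [w0mat, Matrix.mul_fin_three]
    exact Matrix.one_fin_three.symm
  have hBinv : (w0mat * nmat 1 1 u₂)⁻¹ = !![1-u₂, 1, -1; u₂, -1, 0; -1, 0, 0] := by
    apply Matrix.inv_eq_right_inv
    ext i j
    rw [Matrix.one_fin_three]
    fin_cases i <;> fin_cases j <;>
      simp [w0mat, nmat, Matrix.mul_fin_three] <;> ring
  obtain ⟨a, b, c, d, e, f, p, q, r, rfl⟩ :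
      ∃ a b c d e f p q r, g = !![a, b, c; d, e, f; p, q, r] :=
    ⟨_, _, _, _, _, _, _, _, _, Matrix.eta_fin_three g⟩
  rw [hw0inv] at h1
  rw [hBinv] at h2
  simp only [w0mat, nmat, Matrix.mul_fin_three] at h1 h2
  have e10 : d = 0 := by have := hg (show (id (0:Fin 3)) < id 1 by decide); simpa using this
  have e20 : p = 0 := by have := hg (show (id (0:Fin 3)) < id 2 by decide); simpa using this
  have e21 : q = 0 := by have := hg (show (id (1:Fin 3)) < id 2 by decide); simpa using this
  have f10 := h1 (show (id (0:Fin 3)) < id 1 by decide)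
  have f20 := h1 (show (id (0:Fin 3)) < id 2 by decide)
  have f21 := h1 (show (id (1:Fin 3)) < id 2 by decide)
  have k10 := h2 (show (id (0:Fin 3)) < id 1 by decide)
  have k20 := h2 (show (id (0:Fin 3)) < id 2 by decide)
  have k21 := h2 (show (id (1:Fin 3)) < id 2 by decide)
  simp only [Matrix.cons_val', Matrix.cons_val_zero, Matrix.cons_val_one, Matrix.head_cons,
    Matrix.empty_val', Matrix.cons_val_fin_one, Matrix.of_apply, Matrix.cons_val_two,
    Matrix.tail_cons, Matrix.head_fin_const] at f10 f20 f21 k10 k20 k21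
  rw [Matrix.det_fin_three] at hdet
  simp only [Matrix.cons_val', Matrix.cons_val_zero, Matrix.cons_val_one, Matrix.head_cons,
    Matrix.empty_val', Matrix.cons_val_fin_one, Matrix.of_apply, Matrix.cons_val_two,
    Matrix.tail_cons, Matrix.head_fin_const] at hdet
  subst e10 e20 e21
  -- Now derive contradiction
  ring_nf at f10 f20 f21 k10 k20 k21 hdet
  -- f10 : f = 0, f20 : c = 0, f21 : b = 0
  subst f10 f20 f21
  have hr : r = a := by linear_combination k20 + u₂ * k21
  have ha : a ≠ 0 := by
    intro h
    rw [h, zero_mul, zero_mul] at hdet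
    exact zero_ne_one hdet
  have key : a * u₁ = a * u₂ := by linear_combination k10 + u₂ * k21 - u₁ * hr
  exact hne (mul_left_cancel₀ ha key)
end
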